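/- Let V_1, V_2 be linear subspaces of F_2^n of dimension n−k with V_1^⊥ = span(e_1,…,e_k), V_2^⊥ = span(e_k,…,e_{2k−1}) (so V_1^⊥ ∩ V_2^⊥ = {0, e_k}), where 2k−1 ≤ n. Then the affine subspace e_k + V_1 is disjoint from V_2, and the function f = 1_{e_k+V_1} + 1_{V_2} is Boolean with f̂(0) = 1/2^{k−1}, f̂(α) = −1/2^k for α ∈ e_k + (span(e_1,…,e_{k−1}) \ {0}), f̂(α) = 1/2^k for α in (span(e_1,…,e_{k−1}) \ {0}) ∪ (e_k + (span(e_{k+1},…,e_{2k−1}) \ {0})) ∪ (span(e_{k+1},…,e_{2k−1}) \ {0}), and f̂(α) = 0 otherwise. -/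

import Mathlib

/-!
Translating by `a` multiplies the Fourier coefficient at `α` by the character value
`(-1)^⟨α, a⟩`, and the character sum over a subspace `V` vanishes unless the character is trivial
on `V`; hence `(1_{a + V})^(α) = (-1)^⟨α, a⟩ 2^{-codim V} 1_{V^⊥}(α)`. With `c` the coordinate
of `e_k` this gives `2^k f̂(α) = (-1)^{α_c} 1_{V₁^⊥}(α) + 1_{V₂^⊥}(α)`, and the spectrum is read
off from the supports of `α`: on `V₁^⊥ ∩ V₂^⊥ = {0, e_k}` the two terms add up resp. cancel, on
the rest of `V₁^⊥` only the first survives, with sign `(-1)^{α_c}`, and on the rest of `V₂^⊥`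
only the second. The flats `e_k + V₁` and `V₂` are disjoint because `e_k` is orthogonal to `V₁`
and `V₂` but not to itself.
-/

open Finset

/-- The Fourier coefficient `f̂(α) = E_x[f(x)·(-1)^⟨α,x⟩]` of `f : F_2^n → ℝ`. -/
noncomputable def fc {n : ℕ} (f : (Fin n → ZMod 2) → ℝ) (α : Fin n → ZMod 2) : ℝ :=
  (∑ x : Fin n → ZMod 2, f x * (-1 : ℝ) ^ (∑ i, α i * x i : ZMod 2).val) / 2 ^ n

open Function Matrix

lemma ZMod.neg_one_pow_val_add (a b : ZMod 2) :
    (-1 : ℝ) ^ (a + b).val = (-1) ^ a.val * (-1) ^ b.val := by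
  rw [ZMod.val_add, ← neg_one_pow_eq_pow_mod_two, pow_add]

lemma ZMod.neg_one_pow_val_eq_one_iff (a : ZMod 2) : (-1 : ℝ) ^ a.val = 1 ↔ a = 0 := by
  obtain rfl | rfl : a = 0 ∨ a = 1 := by revert a; decide
  · simp
  · norm_num [ZMod.val_one, show (1 : ZMod 2) ≠ 0 by decide]

section Walsh

variable {ι : Type*} [Fintype ι]

def walsh (α : ι → ZMod 2) : AddChar (ι → ZMod 2) ℝ where
  toFun x := (-1) ^ (α ⬝ᵥ x).val
  map_zero_eq_one' := by simp
  map_add_eq_mul' x y := by rw [dotProduct_add, ZMod.neg_one_pow_val_add]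

lemma walsh_apply (α x : ι → ZMod 2) : walsh α x = (-1) ^ (α ⬝ᵥ x).val := rfl

lemma sum_indicator_walsh [DecidableEq ι] (V : Submodule (ZMod 2) (ι → ZMod 2))
    (α : ι → ZMod 2) :
    ∑ x, (V : Set (ι → ZMod 2)).indicator (walsh α) x =
      {y | ∀ v ∈ V, y ⬝ᵥ v = 0}.indicator (fun _ => (Nat.card V : ℝ)) α := by
  classical
  let ψ := (walsh α).compAddMonoidHom V.subtype.toAddMonoidHom
  have hψ : ψ = 0 ↔ ∀ v ∈ V, α ⬝ᵥ v = 0 := by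
    simp [AddChar.eq_zero_iff, ψ, walsh_apply, ZMod.neg_one_pow_val_eq_one_iff]
  rw [Finset.sum_congr_set V ((V : Set (ι → ZMod 2)).indicator (walsh α)) (fun v => ψ v)
    (fun x hx => Set.indicator_of_mem hx _) (fun x hx => Set.indicator_of_notMem hx _),
    AddChar.sum_eq_ite, ← Nat.card_eq_fintype_card, Set.indicator_apply]
  simp only [hψ, Set.mem_ofPred_eq]
  rfl

end Walsh

lemma disjoint_image_add_left_of_dotProduct {ι R : Type*} [Fintype ι] [CommRing R]
    {V₁ V₂ : Submodule R (ι → R)} {a w : ι → R}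
    (h₁ : ∀ v ∈ V₁, w ⬝ᵥ v = 0) (h₂ : ∀ v ∈ V₂, w ⬝ᵥ v = 0) (ha : w ⬝ᵥ a ≠ 0) :
    Disjoint ((a + ·) '' (V₁ : Set (ι → R))) V₂ := by
  rw [Set.disjoint_left]
  rintro _ ⟨v, hv, rfl⟩ hav
  apply ha
  simpa [dotProduct_add, h₁ v hv] using h₂ _ hav

lemma indicator_add_indicator_eq_zero_or_one {α R : Type*} [AddMonoidWithOne R] {s t : Set α}
    (h : Disjoint s t) (x : α) :
    (s.indicator 1 + t.indicator 1 : α → R) x = 0 ∨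
      (s.indicator 1 + t.indicator 1 : α → R) x = 1 := by
  by_cases hs : x ∈ s
  · simp [hs, Set.disjoint_left.1 h hs]
  · by_cases ht : x ∈ t <;> simp [hs, ht]

section FourierCoefficient

variable {n : ℕ}

lemma fc_eq_sum_walsh (f : (Fin n → ZMod 2) → ℝ) (α : Fin n → ZMod 2) :
    fc f α = (∑ x, f x * walsh α x) / 2 ^ n := rfl

lemma fc_add (f g : (Fin n → ZMod 2) → ℝ) (α : Fin n → ZMod 2) :
    fc (f + g) α = fc f α + fc g α := by
  simp only [fc, Pi.add_apply, add_mul, Finset.sum_add_distrib, add_div]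

lemma fc_indicator_vadd (a : Fin n → ZMod 2) (s : Set (Fin n → ZMod 2)) (α : Fin n → ZMod 2) :
    fc (((a + ·) '' s).indicator 1) α = walsh α a * fc (s.indicator 1) α := by
  simp only [fc_eq_sum_walsh, mul_div_assoc', Finset.mul_sum]
  congr 1
  rw [← Equiv.sum_comp (Equiv.addLeft a)]
  refine Finset.sum_congr rfl fun y _ => ?_
  by_cases hy : y ∈ s <;> simp [Set.image_add_left, hy, AddChar.map_add_eq_mul, mul_comm]

lemma fc_indicator_submodule (V : Submodule (ZMod 2) (Fin n → ZMod 2)) (α : Fin n → ZMod 2) :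
    fc ((V : Set (Fin n → ZMod 2)).indicator 1) α =
      {y | ∀ v ∈ V, y ⬝ᵥ v = 0}.indicator 1 α / 2 ^ (n - Module.finrank (ZMod 2) V) := by
  have hV : Module.finrank (ZMod 2) V ≤ n := by
    simpa using V.finrank_le
  have hsum : ∑ x, (V : Set (Fin n → ZMod 2)).indicator 1 x * walsh α x =
      ∑ x, (V : Set (Fin n → ZMod 2)).indicator (walsh α) x := by
    refine Finset.sum_congr rfl fun x _ => ?_
    by_cases hx : x ∈ (V : Set (Fin n → ZMod 2)) <;> simp [hx]
  rw [fc_eq_sum_walsh, hsum, sum_indicator_walsh, Module.natCard_eq_pow_finrank (K := ZMod 2),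
    Nat.card_zmod]
  have h2n : (2 : ℝ) ^ n =
      2 ^ (n - Module.finrank (ZMod 2) V) * 2 ^ Module.finrank (ZMod 2) V := by
    rw [← pow_add, Nat.sub_add_cancel hV]
  by_cases hα : α ∈ {y | ∀ v ∈ V, y ⬝ᵥ v = 0}
  · simp only [Set.indicator_of_mem hα, h2n, Pi.one_apply]
    push_cast
    field_simp
  · simp [Set.indicator_of_notMem hα]

end FourierCoefficient

lemma mem_span_image_single_one_iff {ι R : Type*} [Finite ι] [DecidableEq ι] [Semiring R]
    {s : Set ι} {y : ι → R} :
    y ∈ Submodule.span R ((fun i => Pi.single i (1 : R)) '' s) ↔ support y ⊆ s := by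
  rw [show (fun i => Pi.single i (1 : R)) = Pi.basisFun R ι by ext; simp,
    Module.Basis.mem_span_image, ← Finsupp.fun_support_eq]
  rfl

section Support

variable {ι : Type*} [DecidableEq ι] {c : ι} {P Q : Set ι} {γ : ι → ZMod 2}

lemma support_single_subset_insert (a : ZMod 2) : support (Pi.single c a) ⊆ insert c P :=
  Pi.support_single_subset.trans (by simp)

lemma support_single_add_subset_insert (a : ZMod 2) (hγ : support γ ⊆ P) :
    support (Pi.single c a + γ) ⊆ insert c P :=
  (support_add _ _).trans <| Set.union_subset (support_single_subset_insert a)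
    (hγ.trans (Set.subset_insert _ _))

lemma not_support_single_add_subset_insert (a : ZMod 2) (hPQ : Disjoint P Q) (hc : c ∉ P)
    (hγ : support γ ⊆ P) (hγ0 : γ ≠ 0) : ¬ support (Pi.single c a + γ) ⊆ insert c Q := by
  obtain ⟨i, hi⟩ := Function.ne_iff.1 hγ0
  have hiP : i ∈ P := hγ hi
  have hic : i ≠ c := fun h => hc (h ▸ hiP)
  intro h
  rcases h (show i ∈ support (Pi.single c a + γ) by simpa [hic] using hi) with rfl | hiQ
  · exact hic rfl
  · exact Set.disjoint_left.1 hPQ hiP hiQ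

lemma exists_eq_or_eq_single_add_of_support_subset_insert {y : ι → ZMod 2}
    (hy : support y ⊆ insert c P) (hy0 : y ≠ 0) (hyc : y ≠ Pi.single c 1) :
    ∃ γ, support γ ⊆ P ∧ γ ≠ 0 ∧ (y = γ ∨ y = Pi.single c 1 + γ) := by
  have hγ : support (update y c 0) ⊆ P := by
    intro i hi
    have hic : i ≠ c := by rintro rfl; simp at hi
    exact (hy (by simpa [hic] using hi)).resolve_left hic
  have hy : y = Pi.single c (y c) + update y c 0 := by
    ext i; by_cases hic : i = c <;> simp [hic]
  obtain h | h : y c = 0 ∨ y c = 1 := by generalize y c = a; revert a; decide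
  · refine ⟨_, hγ, ?_, .inl ?_⟩ <;> rw [h, Pi.single_zero, zero_add] at hy
    exacts [hy ▸ hy0, hy]
  · refine ⟨_, hγ, fun h0 => hyc ?_, .inr (h ▸ hy)⟩
    rw [hy, h, h0, add_zero]

end Support

section TwoFlatSpectrum

variable {ι : Type*} {c : ι} {P Q : Set ι}

/-- `2 ^ k` times the Fourier coefficient at `α` of `1_{e_c + V₁} + 1_{V₂}`, where `V₁^⊥` and
`V₂^⊥` (of dimension `k`) consist of the vectors supported on `insert c P` and `insert c Q`. -/
noncomputable def twoFlatSpectrum (c : ι) (P Q : Set ι) (α : ι → ZMod 2) : ℝ :=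
  (-1) ^ (α c).val * {y | support y ⊆ insert c P}.indicator 1 α +
    {y | support y ⊆ insert c Q}.indicator 1 α

lemma twoFlatSpectrum_zero : twoFlatSpectrum c P Q 0 = 2 := by
  norm_num [twoFlatSpectrum]

variable [DecidableEq ι]

lemma twoFlatSpectrum_single_one : twoFlatSpectrum c P Q (Pi.single c 1) = 0 := by
  rw [twoFlatSpectrum, Set.indicator_of_mem (support_single_subset_insert 1),
    Set.indicator_of_mem (support_single_subset_insert 1)]
  norm_num [ZMod.val_one]

variable {γ : ι → ZMod 2}

lemma twoFlatSpectrum_single_add_of_support_subset_left (a : ZMod 2) (hPQ : Disjoint P Q)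
    (hc : c ∉ P) (hγ : support γ ⊆ P) (hγ0 : γ ≠ 0) :
    twoFlatSpectrum c P Q (Pi.single c a + γ) = (-1) ^ a.val := by
  have hγc : γ c = 0 := notMem_support.1 fun h => hc (hγ h)
  rw [twoFlatSpectrum, Set.indicator_of_mem (support_single_add_subset_insert a hγ),
    Set.indicator_of_notMem (not_support_single_add_subset_insert a hPQ hc hγ hγ0)]
  simp [hγc]

lemma twoFlatSpectrum_single_add_of_support_subset_right (a : ZMod 2) (hPQ : Disjoint P Q)
    (hc : c ∉ Q) (hγ : support γ ⊆ Q) (hγ0 : γ ≠ 0) :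
    twoFlatSpectrum c P Q (Pi.single c a + γ) = 1 := by
  rw [twoFlatSpectrum,
    Set.indicator_of_notMem (not_support_single_add_subset_insert a hPQ.symm hc hγ hγ0),
    Set.indicator_of_mem (support_single_add_subset_insert a hγ)]
  simp

lemma twoFlatSpectrum_of_support_subset_left (hPQ : Disjoint P Q) (hc : c ∉ P)
    (hγ : support γ ⊆ P) (hγ0 : γ ≠ 0) : twoFlatSpectrum c P Q γ = 1 := by
  simpa using twoFlatSpectrum_single_add_of_support_subset_left 0 hPQ hc hγ hγ0

lemma twoFlatSpectrum_of_support_subset_right (hPQ : Disjoint P Q) (hc : c ∉ Q)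
    (hγ : support γ ⊆ Q) (hγ0 : γ ≠ 0) : twoFlatSpectrum c P Q γ = 1 := by
  simpa using twoFlatSpectrum_single_add_of_support_subset_right 0 hPQ hc hγ hγ0

lemma twoFlatSpectrum_eq_zero {α : ι → ZMod 2} (hα0 : α ≠ 0) (hαc : α ≠ Pi.single c 1)
    (hP : ¬ ∃ γ, support γ ⊆ P ∧ γ ≠ 0 ∧ (α = γ ∨ α = Pi.single c 1 + γ))
    (hQ : ¬ ∃ γ, support γ ⊆ Q ∧ γ ≠ 0 ∧ (α = γ ∨ α = Pi.single c 1 + γ)) :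
    twoFlatSpectrum c P Q α = 0 := by
  have hα : ∀ {R : Set ι}, support α ⊆ insert c R →
      ∃ γ, support γ ⊆ R ∧ γ ≠ 0 ∧ (α = γ ∨ α = Pi.single c 1 + γ) :=
    fun h => exists_eq_or_eq_single_add_of_support_subset_insert h hα0 hαc
  rw [twoFlatSpectrum, Set.indicator_of_notMem fun h => hP (hα h),
    Set.indicator_of_notMem fun h => hQ (hα h)]
  simp

end TwoFlatSpectrum

lemma fc_indicator_single_add_add_indicator {n k : ℕ} {c : Fin n} {P Q : Set (Fin n)}
    {V₁ V₂ : Submodule (ZMod 2) (Fin n → ZMod 2)} (hk : k ≤ n)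
    (hd₁ : Module.finrank (ZMod 2) V₁ = n - k) (hd₂ : Module.finrank (ZMod 2) V₂ = n - k)
    (hW₁ : {y : Fin n → ZMod 2 | ∀ v ∈ V₁, y ⬝ᵥ v = 0} = {y | support y ⊆ insert c P})
    (hW₂ : {y : Fin n → ZMod 2 | ∀ v ∈ V₂, y ⬝ᵥ v = 0} = {y | support y ⊆ insert c Q})
    (α : Fin n → ZMod 2) :
    fc (((Pi.single c 1 + ·) '' (V₁ : Set (Fin n → ZMod 2))).indicator 1 +
      (V₂ : Set (Fin n → ZMod 2)).indicator 1) α = twoFlatSpectrum c P Q α / 2 ^ k := by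
  rw [fc_add, fc_indicator_vadd, fc_indicator_submodule, fc_indicator_submodule, hd₁, hd₂,
    Nat.sub_sub_self hk, walsh_apply, dotProduct_single, mul_one, twoFlatSpectrum, hW₁, hW₂]
  ring

/-- Indices are 0-based: the paper's `e_i` is `Pi.single (i-1) 1` here, so its `e_k` is
`Pi.single ⟨k-1, _⟩ 1`. -/
theorem stmt_19 {n k : ℕ} (hk : 1 ≤ k) (hn : 2 * k - 1 ≤ n)
    (V₁ V₂ : Submodule (ZMod 2) (Fin n → ZMod 2))
    (hd1 : Module.finrank (ZMod 2) V₁ = n - k)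
    (hd2 : Module.finrank (ZMod 2) V₂ = n - k)
    (h1 : {y : Fin n → ZMod 2 | ∀ v ∈ V₁, (∑ i, y i * v i : ZMod 2) = 0} =
      (Submodule.span (ZMod 2)
        ((fun i : Fin n => Pi.single i (1 : ZMod 2)) '' {i : Fin n | (i : ℕ) < k}) :
        Set (Fin n → ZMod 2)))
    (h2 : {y : Fin n → ZMod 2 | ∀ v ∈ V₂, (∑ i, y i * v i : ZMod 2) = 0} =
      (Submodule.span (ZMod 2)
        ((fun i : Fin n => Pi.single i (1 : ZMod 2)) ''
          {i : Fin n | k - 1 ≤ (i : ℕ) ∧ (i : ℕ) < 2 * k - 1}) :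
        Set (Fin n → ZMod 2))) :
    ∀ ek : Fin n → ZMod 2, ek = Pi.single (⟨k - 1, by omega⟩ : Fin n) (1 : ZMod 2) →
    ∀ f : (Fin n → ZMod 2) → ℝ,
      f = Set.indicator ((ek + ·) '' (V₁ : Set (Fin n → ZMod 2))) 1 +
        Set.indicator (V₂ : Set (Fin n → ZMod 2)) 1 →
    ∀ S₁ S₂ : Submodule (ZMod 2) (Fin n → ZMod 2),
      S₁ = Submodule.span (ZMod 2)
        ((fun i : Fin n => Pi.single i (1 : ZMod 2)) '' {i : Fin n | (i : ℕ) < k - 1}) →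
      S₂ = Submodule.span (ZMod 2)
        ((fun i : Fin n => Pi.single i (1 : ZMod 2)) ''
          {i : Fin n | k ≤ (i : ℕ) ∧ (i : ℕ) < 2 * k - 1}) →
    (Disjoint ((ek + ·) '' (V₁ : Set (Fin n → ZMod 2))) (V₂ : Set (Fin n → ZMod 2)) ∧
     (∀ x, f x = 0 ∨ f x = 1) ∧
     fc f 0 = 1 / 2 ^ (k - 1) ∧
     (∀ α : Fin n → ZMod 2,
        (∃ γ ∈ S₁, γ ≠ 0 ∧ α = ek + γ) → fc f α = -(1 / 2 ^ k)) ∧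
     (∀ α : Fin n → ZMod 2,
        ((α ∈ S₁ ∧ α ≠ 0) ∨ (∃ γ ∈ S₂, γ ≠ 0 ∧ α = ek + γ) ∨ (α ∈ S₂ ∧ α ≠ 0)) →
          fc f α = 1 / 2 ^ k) ∧
     (∀ α : Fin n → ZMod 2,
        α ≠ 0 →
        ¬ (∃ γ ∈ S₁, γ ≠ 0 ∧ α = ek + γ) →
        ¬ ((α ∈ S₁ ∧ α ≠ 0) ∨ (∃ γ ∈ S₂, γ ≠ 0 ∧ α = ek + γ) ∨ (α ∈ S₂ ∧ α ≠ 0)) →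
          fc f α = 0)) := by
  intro ek hek f hf S₁ S₂ hS₁ hS₂
  subst hek hf hS₁ hS₂
  set c : Fin n := ⟨k - 1, by omega⟩
  set P : Set (Fin n) := {i | (i : ℕ) < k - 1}
  set Q : Set (Fin n) := {i | k ≤ (i : ℕ) ∧ (i : ℕ) < 2 * k - 1}
  have hcP : c ∉ P := by simp [c, P]
  have hcQ : c ∉ Q := by simp [c, Q]; omega
  have hPQ : Disjoint P Q := Set.disjoint_left.2 fun i hP hQ => by simp [P, Q] at hP hQ; omega
  have hW₁ : {y : Fin n → ZMod 2 | ∀ v ∈ V₁, y ⬝ᵥ v = 0} = {y | support y ⊆ insert c P} := by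
    rw [show insert c P = {i : Fin n | (i : ℕ) < k} by ext i; simp [c, P, Fin.ext_iff]; omega]
    exact h1.trans (Set.ext fun _ => mem_span_image_single_one_iff)
  have hW₂ : {y : Fin n → ZMod 2 | ∀ v ∈ V₂, y ⬝ᵥ v = 0} = {y | support y ⊆ insert c Q} := by
    rw [show insert c Q = {i : Fin n | k - 1 ≤ (i : ℕ) ∧ (i : ℕ) < 2 * k - 1} by
      ext i; simp [c, Q, Fin.ext_iff]; omega]
    exact h2.trans (Set.ext fun _ => mem_span_image_single_one_iff)
  have hfc := fc_indicator_single_add_add_indicator (by omega) hd1 hd2 hW₁ hW₂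
  have hdisj : Disjoint ((Pi.single c 1 + ·) '' (V₁ : Set (Fin n → ZMod 2))) V₂ := by
    refine disjoint_image_add_left_of_dotProduct (w := Pi.single c 1) ?_ ?_ (by simp)
    · exact (hW₁ ▸ support_single_subset_insert 1 : Pi.single c 1 ∈ {y | ∀ v ∈ V₁, y ⬝ᵥ v = 0})
    · exact (hW₂ ▸ support_single_subset_insert 1 : Pi.single c 1 ∈ {y | ∀ v ∈ V₂, y ⬝ᵥ v = 0})
  refine ⟨hdisj, indicator_add_indicator_eq_zero_or_one hdisj, ?_, ?_, ?_, ?_⟩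
  · rw [hfc, twoFlatSpectrum_zero, ← Nat.sub_add_cancel hk, pow_succ, Nat.add_sub_cancel]
    field_simp
  · rintro α ⟨γ, hγ, hγ0, rfl⟩
    rw [hfc, twoFlatSpectrum_single_add_of_support_subset_left 1 hPQ hcP
      (mem_span_image_single_one_iff.1 hγ) hγ0]
    norm_num [ZMod.val_one, neg_div]
  · rintro α (⟨hα, hα0⟩ | ⟨γ, hγ, hγ0, rfl⟩ | ⟨hα, hα0⟩) <;> rw [hfc]
    · rw [twoFlatSpectrum_of_support_subset_left hPQ hcP (mem_span_image_single_one_iff.1 hα) hα0]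
    · rw [twoFlatSpectrum_single_add_of_support_subset_right 1 hPQ hcQ
        (mem_span_image_single_one_iff.1 hγ) hγ0]
    · rw [twoFlatSpectrum_of_support_subset_right hPQ hcQ (mem_span_image_single_one_iff.1 hα) hα0]
  · intro α hα0 hne₁ hne₂
    by_cases hαc : α = Pi.single c 1
    · rw [hfc, hαc, twoFlatSpectrum_single_one, zero_div]
    rw [hfc, twoFlatSpectrum_eq_zero hα0 hαc, zero_div]
    · rintro ⟨γ, hγ, hγ0, rfl | rfl⟩
      · exact hne₂ (.inl ⟨mem_span_image_single_one_iff.2 hγ, hγ0⟩)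
      · exact hne₁ ⟨γ, mem_span_image_single_one_iff.2 hγ, hγ0, rfl⟩
    · rintro ⟨γ, hγ, hγ0, rfl | rfl⟩
      · exact hne₂ (.inr (.inr ⟨mem_span_image_single_one_iff.2 hγ, hγ0⟩))
      · exact hne₂ (.inr (.inl ⟨γ, mem_span_image_single_one_iff.2 hγ, hγ0, rfl⟩))
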